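/- arXiv:1905.13393 — 4 statements merged into one kernel-verified Lean document; each statement's English description precedes it below -/
import Mathlib

section
/- In F_q[x], D_m(x) = χ(2) · ∏_{b} (b - x), where the product is over all b ∈ F_q such that both 2 - b and 2 + b are nonsquares in F_q, and D_m denotes the image in F_q[x] of the m-th Dickson polynomial of the first kind. -/
open scoped Classical
open Polynomial

/-- The Legendre symbol on a finite field: `1` on nonzero squares, `-1` on nonsquares,
`0` at `0`. -/
noncomputable def χ {F : Type*} [Field F] [Fintype F] (a : F) : ℤ :=
  if a = 0 then 0 else if IsSquare a then 1 else -1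

/-- The Dickson polynomials of the first kind: `D 0 = 2`, `D 1 = X`,
`D (k+2) = X * D (k+1) - D k`. -/
noncomputable def dicksonFst : ℕ → Polynomial ℤ
  | 0 => 2
  | 1 => Polynomial.X
  | (k + 2) => Polynomial.X * dicksonFst (k + 1) - dicksonFst k

/-!
In an algebraically closed extension of `F = 𝔽_q` write `b = s² + r²` with `s r = 1`, so that
`D_m(b) = s^(2m) + r^(2m)` vanishes as soon as `s^(4m) = -1`. Now `s + r` and `s - r` are square
roots of `2 + b` and `b - 2`, so by Euler's criterion the Frobenius multiplies them by
`χ(2 + b)` and `χ(b - 2) = χ(-1) χ(2 - b)`. If `2 - b` and `2 + b` are nonsquares it therefore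
sends `s` to `-s` when `ε = 1` and to `-r = -s⁻¹` when `ε = -1`; either way `s^(q - ε) = -1`.
Hence all such `b` are roots of the monic polynomial `D_m` of degree `m`, and a Jacobsthal-type
character sum shows that there are exactly `(q - ε) / 4 = m` of them. So
`D_m = ∏ (x - b) = (-1)^m ∏ (b - x)`, and `χ(2) = (-1)^m` by the supplementary law for `2`.
-/

theorem dicksonFst_eq_dickson : ∀ n, dicksonFst n = dickson 1 1 n
  | 0 => by rw [dicksonFst, dickson_zero]; norm_num
  | 1 => by rw [dicksonFst, dickson_one]
  | n + 2 => by
    rw [dicksonFst, dickson_add_two, dicksonFst_eq_dickson (n + 1), dicksonFst_eq_dickson n,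
      C_1, one_mul]

namespace Polynomial

variable {R : Type*} [CommRing R]

theorem natDegree_dickson_one_one_le : ∀ n, (dickson 1 (1 : R) n).natDegree ≤ n
  | 0 => by rw [dickson_zero]; norm_num
  | 1 => by simpa [dickson_one] using natDegree_X_le
  | n + 2 => by
    rw [dickson_add_two, C_1, one_mul]
    refine (natDegree_sub_le _ _).trans (max_le ?_ ((natDegree_dickson_one_one_le n).trans ?_))
    · exact natDegree_mul_le.trans
        ((add_le_add natDegree_X_le (natDegree_dickson_one_one_le (n + 1))).trans_eq (by ring))
    · omega

theorem coeff_dickson_one_one_self : ∀ n, 0 < n → (dickson 1 (1 : R) n).coeff n = 1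
  | 1, _ => by simp [dickson_one]
  | n + 2, _ => by
    rw [dickson_add_two, C_1, one_mul, coeff_sub, coeff_X_mul,
      coeff_dickson_one_one_self (n + 1) n.succ_pos,
      coeff_eq_zero_of_natDegree_lt ((natDegree_dickson_one_one_le n).trans_lt (by omega)),
      sub_zero]

theorem dickson_one_one_monic {n : ℕ} (hn : 0 < n) : (dickson 1 (1 : R) n).Monic :=
  monic_of_natDegree_le_of_coeff_eq_one n (natDegree_dickson_one_one_le n)
    (coeff_dickson_one_one_self n hn)

theorem dickson_one_one_eval_add_eq_zero {x y : R} (hxy : x * y = 1) {n : ℕ}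
    (hx : x ^ (2 * n) = -1) : (dickson 1 (1 : R) n).eval (x + y) = 0 := by
  rw [dickson_one_one_eval_add_inv x y hxy]
  linear_combination y ^ n * hx - x ^ n * (congrArg (· ^ n) hxy)

theorem eq_prod_X_sub_C_of_monic_of_natDegree_le [IsDomain R] {p : R[X]} {s : Finset R}
    (hp : p.Monic) (hdeg : p.natDegree ≤ s.card) (hroots : ∀ a ∈ s, p.IsRoot a) :
    p = ∏ a ∈ s, (X - C a) := by
  refine eq_of_monic_of_dvd_of_natDegree_le (monic_prod_X_sub_C id s) hp ?_ (by simpa using hdeg)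
  refine (Multiset.prod_X_sub_C_dvd_iff_le_roots hp.ne_zero s.val).2 ?_
  exact Finset.val_le_iff_val_subset.2 fun a ha => (mem_roots hp.ne_zero).2 (hroots a ha)

end Polynomial

theorem IsAlgClosed.exists_mul_eq_one_and_sq_add_sq_eq {K : Type*} [Field K] [IsAlgClosed K]
    (c : K) : ∃ s r : K, s * r = 1 ∧ s ^ 2 + r ^ 2 = c := by
  have hdeg : (X ^ 2 - C c * X + 1 : K[X]).degree = 2 := by compute_degree!
  obtain ⟨y, hy⟩ := IsAlgClosed.exists_root _ (hdeg ▸ two_ne_zero)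
  obtain ⟨s, rfl⟩ := IsAlgClosed.exists_eq_mul_self y
  simp only [IsRoot, eval_add, eval_sub, eval_mul, eval_pow, eval_C, eval_X, eval_one] at hy
  exact ⟨s, (c - s * s) * s, by linear_combination -hy, by linear_combination -(c - s * s) * hy⟩

section FiniteField

variable {F : Type*} [Field F] [Fintype F]

local notation "q" => Fintype.card F

theorem quadraticChar_neg_one_eq_neg_one_pow (hF : ringChar F ≠ 2) :
    quadraticChar F (-1) = (-1) ^ ((q - 1) / 2) := by
  have hq := FiniteField.odd_card_of_char_ne_two hF
  rw [quadraticChar_neg_one hF, ZMod.χ₄_eq_neg_one_pow hq]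
  congr 1
  omega

theorem χ_two_eq_neg_one_pow (hF : ringChar F ≠ 2) {m : ℕ}
    (hm : 4 * (m : ℤ) = q - quadraticChar F (-1)) : χ (2 : F) = (-1) ^ m := by
  have hq := FiniteField.odd_card_of_char_ne_two hF
  have h4 : 4 * m + 1 = q ∨ 4 * m = q + 1 := by
    rcases quadraticChar_dichotomy (neg_ne_zero.2 (one_ne_zero' F)) with h | h <;>
      rw [h] at hm <;> omega
  have h2 : IsSquare (2 : F) ↔ Even m := by
    rw [FiniteField.isSquare_two_iff, Nat.even_iff]
    omega
  rw [χ, if_neg (Ring.two_ne_zero hF)]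
  split_ifs with hsq
  · exact ((h2.1 hsq).neg_one_pow).symm
  · exact ((Nat.not_even_iff_odd.1 (mt h2.2 hsq)).neg_one_pow).symm

theorem sum_quadraticChar_mul_sub (hF : ringChar F ≠ 2) {c : F} (hc : c ≠ 0) :
    ∑ u : F, quadraticChar F (u * (c - u)) = -quadraticChar F (-1) := by
  -- `u ↦ c * u⁻¹ - 1` permutes `F` (with `0⁻¹ = 0` sending `0` to `-1`)
  let e : F ≃ F := ((Equiv.inv F).trans (Equiv.mulLeft₀ c hc)).trans (Equiv.subRight 1)
  have hperm : ∑ u : F, quadraticChar F (c * u⁻¹ - 1) = 0 := by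
    simpa [e] using (e.sum_comp (quadraticChar F ·)).trans (quadraticChar_sum_zero hF)
  have hterm : ∀ u ∈ Finset.univ.erase (0 : F),
      quadraticChar F (u * (c - u)) = quadraticChar F (c * u⁻¹ - 1) := by
    intro u hu
    have hu : u ≠ 0 := Finset.ne_of_mem_erase hu
    rw [show u * (c - u) = u ^ 2 * (c * u⁻¹ - 1) by field_simp, map_mul,
      quadraticChar_sq_one' hu, one_mul]
  rw [← Finset.add_sum_erase _ _ (Finset.mem_univ 0)] at hperm ⊢
  rw [Finset.sum_congr rfl hterm]
  simp only [inv_zero, mul_zero, zero_sub, zero_mul, MulChar.map_zero, zero_add] at hperm ⊢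
  linarith

theorem one_sub_quadraticChar_two_sub_mul_one_sub_quadraticChar_two_add (hF : ringChar F ≠ 2)
    (b : F) :
    (1 - quadraticChar F (2 - b)) * (1 - quadraticChar F (2 + b)) =
      if ¬IsSquare (2 - b) ∧ ¬IsSquare (2 + b) then 4 else 0 := by
  have h4 : quadraticChar F 4 = 1 := by
    simpa [show (2 : F) ^ 2 = 4 by norm_num] using quadraticChar_sq_one' (Ring.two_ne_zero hF)
  by_cases hl : 2 - b = 0
  · obtain rfl : b = 2 := (sub_eq_zero.1 hl).symm
    simp [show (2 : F) + 2 = 4 by norm_num, h4]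
  by_cases hr : 2 + b = 0
  · obtain rfl : b = -2 := eq_neg_of_add_eq_zero_right hr
    simp [show (2 : F) - -2 = 4 by norm_num, h4]
  rcases quadraticChar_dichotomy hl with hl' | hl' <;>
    rcases quadraticChar_dichotomy hr with hr' | hr' <;>
    simp [← quadraticChar_neg_one_iff_not_isSquare, hl', hr']

theorem card_filter_not_isSquare_two_sub_and_two_add (hF : ringChar F ≠ 2) :
    4 * ((Finset.univ.filter fun b : F => ¬IsSquare (2 - b) ∧ ¬IsSquare (2 + b)).card : ℤ) =
      q - quadraticChar F (-1) := by
  have hsub : ∑ b : F, quadraticChar F (2 - b) = 0 := by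
    simpa using (Equiv.sum_comp (Equiv.subLeft (2 : F)) (quadraticChar F ·)).trans
      (quadraticChar_sum_zero hF)
  have hadd : ∑ b : F, quadraticChar F (2 + b) = 0 := by
    simpa using (Equiv.sum_comp (Equiv.addLeft (2 : F)) (quadraticChar F ·)).trans
      (quadraticChar_sum_zero hF)
  have hprod : ∑ b : F, quadraticChar F (2 - b) * quadraticChar F (2 + b) =
      -quadraticChar F (-1) := by
    have h4 : (4 : F) ≠ 0 := by
      simpa [show (2 : F) ^ 2 = 4 by norm_num] using pow_ne_zero 2 (Ring.two_ne_zero hF)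
    rw [← sum_quadraticChar_mul_sub hF h4, ← Equiv.sum_comp (Equiv.subLeft (2 : F))]
    refine Finset.sum_congr rfl fun b _ => ?_
    rw [← map_mul, Equiv.subLeft_apply]
    congr 1
    ring
  calc
    _ = ∑ b : F, (1 - quadraticChar F (2 - b)) * (1 - quadraticChar F (2 + b)) := by
      simp_rw [one_sub_quadraticChar_two_sub_mul_one_sub_quadraticChar_two_add hF,
        Finset.natCast_card_filter, Finset.mul_sum, mul_ite, mul_one, mul_zero]
    _ = q - quadraticChar F (-1) := by
      simp only [sub_mul, one_mul, mul_sub, mul_one, Finset.sum_sub_distrib, hsub, hadd, hprod]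
      simp

theorem pow_card_eq_quadraticChar_mul_of_sq_eq (hF : ringChar F ≠ 2) {K : Type*} [CommRing K]
    [Algebra F K] {a : F} {t : K} (ht : t ^ 2 = algebraMap F K a) :
    t ^ q = quadraticChar F a * t := by
  have hq : q = 2 * (q / 2) + 1 := by have := FiniteField.odd_card_of_char_ne_two hF; omega
  rw [← map_intCast (algebraMap F K), quadraticChar_eq_pow_of_char_ne_two' hF, map_pow, ← ht,
    ← pow_mul, ← pow_succ, ← hq]

theorem pow_four_mul_eq_neg_one_of_not_isSquare {K : Type*} [Field K] [Algebra F K]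
    (hF : ringChar F ≠ 2) {m : ℕ} (hm : 4 * (m : ℤ) = q - quadraticChar F (-1)) {b : F}
    (hb₁ : ¬IsSquare (2 - b)) (hb₂ : ¬IsSquare (2 + b)) {s r : K} (hsr : s * r = 1)
    (hb : s ^ 2 + r ^ 2 = algebraMap F K b) : s ^ (4 * m) = -1 := by
  have h2 : (2 : K) ≠ 0 := by
    rw [← map_ofNat (algebraMap F K)]
    exact (_root_.map_ne_zero _).2 (Ring.two_ne_zero hF)
  have hadd : (s + r) ^ q = -(s + r) := by
    rw [pow_card_eq_quadraticChar_mul_of_sq_eq hF (a := 2 + b)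
        (by rw [map_add, map_ofNat, ← hb]; linear_combination 2 * hsr),
      quadraticChar_neg_one_iff_not_isSquare.2 hb₂]
    push_cast
    ring
  have hsub : (s - r) ^ q = -quadraticChar F (-1) * (s - r) := by
    rw [pow_card_eq_quadraticChar_mul_of_sq_eq hF (a := b - 2)
        (by rw [map_sub, map_ofNat, ← hb]; linear_combination -2 * hsr),
      show b - 2 = -1 * (2 - b) by ring, map_mul, quadraticChar_neg_one_iff_not_isSquare.2 hb₁]
    push_cast
    ring
  have hfrob : 2 * s ^ q = (s + r) ^ q + (s - r) ^ q := by
    have hφ : ∀ x : K, x ^ q = FiniteField.frobeniusAlgHom F K x := fun _ => rfl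
    rw [hφ, hφ, hφ, ← map_add, show s + r + (s - r) = 2 * s by ring, map_mul, map_ofNat]
  rw [hadd, hsub] at hfrob
  rcases quadraticChar_dichotomy (neg_ne_zero.2 (one_ne_zero' F)) with hε | hε <;>
    rw [hε] at hm hfrob
  · have hq : q = 4 * m + 1 := by omega
    refine mul_right_cancel₀ (left_ne_zero_of_mul_eq_one hsr) (mul_left_cancel₀ h2 ?_)
    rw [← pow_succ, ← hq, hfrob]
    push_cast
    ring
  · have hq : 4 * m = q + 1 := by omega
    refine mul_left_cancel₀ h2 ?_
    rw [hq, pow_succ, ← mul_assoc, hfrob, ← hsr]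
    push_cast
    ring

theorem dickson_one_one_eval_eq_zero_of_not_isSquare (hF : ringChar F ≠ 2) {m : ℕ}
    (hm : 4 * (m : ℤ) = q - quadraticChar F (-1)) {b : F} (hb₁ : ¬IsSquare (2 - b))
    (hb₂ : ¬IsSquare (2 + b)) : (dickson 1 (1 : F) m).eval b = 0 := by
  obtain ⟨s, r, hsr, hb⟩ :=
    IsAlgClosed.exists_mul_eq_one_and_sq_add_sq_eq (algebraMap F (AlgebraicClosure F) b)
  apply (algebraMap F (AlgebraicClosure F)).injective
  rw [map_zero, ← eval₂_at_apply, ← eval_map, map_dickson, map_one, ← hb]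
  refine dickson_one_one_eval_add_eq_zero (by rw [← mul_pow, hsr, one_pow]) ?_
  rw [← pow_mul, ← pow_four_mul_eq_neg_one_of_not_isSquare hF hm hb₁ hb₂ hsr hb]
  ring_nf

end FiniteField

/-- With `ε = (-1)^((q-1)/2)` and `m = (q - ε)/4` (a positive integer),
in `F_q[x]` we have `D_m(x) = χ(2) · ∏ (b - x)`, the product over all `b ∈ F_q` such that
both `2 - b` and `2 + b` are nonsquares in `F_q`. -/
theorem dickson_factorization' {F : Type*} [Field F] [Fintype F]
    (hq : Odd (Fintype.card F)) (m : ℕ) (hm0 : 0 < m)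
    (hm : 4 * (m : ℤ) = (Fintype.card F : ℤ) - (-1) ^ ((Fintype.card F - 1) / 2)) :
    (dicksonFst m).map (Int.castRingHom F) =
      Polynomial.C ((χ (2 : F) : ℤ) : F) *
        ∏ b ∈ Finset.univ.filter (fun b : F => ¬ IsSquare (2 - b) ∧ ¬ IsSquare (2 + b)),
          (Polynomial.C b - Polynomial.X) := by
  have hF : ringChar F ≠ 2 := by
    rw [Ne, FiniteField.even_card_iff_char_two, Nat.odd_iff.1 hq]
    exact one_ne_zero
  rw [← quadraticChar_neg_one_eq_neg_one_pow hF] at hm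
  have hcount := card_filter_not_isSquare_two_sub_and_two_add hF
  set S := Finset.univ.filter (fun b : F => ¬ IsSquare (2 - b) ∧ ¬ IsSquare (2 + b))
  have hS : S.card = m := by omega
  have hD : dickson 1 (1 : F) m = ∏ b ∈ S, (X - C b) := by
    refine eq_prod_X_sub_C_of_monic_of_natDegree_le (dickson_one_one_monic hm0)
      ((natDegree_dickson_one_one_le m).trans hS.ge) fun b hb => ?_
    obtain ⟨-, hb₁, hb₂⟩ := Finset.mem_filter.1 hb
    exact dickson_one_one_eval_eq_zero_of_not_isSquare hF hm hb₁ hb₂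
  rw [dicksonFst_eq_dickson, map_dickson, map_one, hD, χ_two_eq_neg_one_pow hF hm]
  simp_rw [← neg_sub X (C _), Finset.prod_neg, hS, ← mul_assoc]
  push_cast
  rw [map_pow, map_neg, map_one, ← mul_pow, neg_one_mul, neg_neg, one_pow, one_mul]
end

section
/- The product of all nonzero a ∈ F_q such that both 1 - a and a + 3 are nonsquares in F_q equals 2 if q ≡ 1 or q ≡ -1 (mod 12), and equals -1 otherwise. -/
open scoped Classical

/-!
Put `t = -1 - a`: the product becomes `∏ (-1 - t)` over the set `B` of `t` with `2 + t` and
`2 - t` both nonsquares. Write `q = 4k ± 1`. In the algebraic closure every `t` is `δ² + δ⁻²`,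
and then `2 + t = (δ + δ⁻¹)²`, `2 - t = (ι (δ - δ⁻¹))²` with `ι² = -1`. By Euler's criterion a
nonzero square root `r` of an element of `F` satisfies `r ^ q = -r` exactly when that element is a
nonsquare, and following Frobenius on `δ` this gives `t ∈ B ↔ δ ^ (4k) = -1`. As
`D_k(δ² + δ⁻²) = δ^(2k) + δ^(-2k)` for the Dickson polynomial `D_k = dickson 1 1 k`, every element
of `B` is a root of `D_k`; conversely `σ ↦ σ + σ⁻¹` maps the `2k` roots of `σ ^ (2k) = -1` at most
two-to-one into `B`, so `#B ≥ k = deg D_k`. Hence `∏_{t ∈ B} (X - t) = D_k`, and the product is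
`D_k(-1)`, which is `3`-periodic in `k`: it equals `2` if `3 ∣ k` and `-1` otherwise.
-/

open Polynomial Finset

namespace Polynomial

variable {R : Type*} [CommRing R]

theorem natDegree_dickson_le (k : ℕ) (a : R) : ∀ n, (dickson k a n).natDegree ≤ n
  | 0 => by rw [dickson_zero]; exact (natDegree_sub_le _ _).trans (by simp)
  | 1 => by rw [dickson_one]; exact natDegree_X_le
  | n + 2 => by
    rw [dickson_add_two]
    refine (natDegree_sub_le _ _).trans (max_le ?_ ?_)
    · exact (natDegree_mul_le_of_le natDegree_X_le (natDegree_dickson_le k a (n + 1))).trans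
        (by omega)
    · exact (natDegree_C_mul_le _ _).trans ((natDegree_dickson_le k a n).trans (by omega))

theorem coeff_dickson_succ_self (k : ℕ) (a : R) : ∀ n, (dickson k a (n + 1)).coeff (n + 1) = 1
  | 0 => by simp [dickson_one]
  | n + 1 => by
    rw [dickson_add_two, coeff_sub, coeff_X_mul, coeff_dickson_succ_self k a n, coeff_C_mul,
      coeff_eq_zero_of_natDegree_lt ((natDegree_dickson_le k a n).trans_lt (by omega)),
      mul_zero, sub_zero]

theorem dickson_monic (k : ℕ) (a : R) {n : ℕ} (hn : n ≠ 0) : (dickson k a n).Monic := by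
  obtain ⟨n, rfl⟩ := Nat.exists_eq_succ_of_ne_zero hn
  exact monic_of_natDegree_le_of_coeff_eq_one _ (natDegree_dickson_le k a _)
    (coeff_dickson_succ_self k a n)

theorem dickson_one_one_eval_neg_one :
    ∀ n, (dickson 1 (1 : R) n).eval (-1) = if 3 ∣ n then 2 else -1
  | 0 => by norm_num [dickson_zero]
  | 1 => by simp
  | n + 2 => by
    rw [dickson_add_two, eval_sub, eval_mul, eval_mul, eval_X, eval_C,
      dickson_one_one_eval_neg_one (n + 1), dickson_one_one_eval_neg_one n]
    split_ifs <;> first | omega | norm_num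

end Polynomial

theorem add_inv_eq_neg_and_sub_inv_eq_neg_iff {K : Type*} [Field K] (h2 : (2 : K) ≠ 0)
    {τ ρ : K} : τ + τ⁻¹ = -(ρ + ρ⁻¹) ∧ τ - τ⁻¹ = -(ρ - ρ⁻¹) ↔ τ = -ρ := by
  refine ⟨fun ⟨h₁, h₂⟩ => mul_left_cancel₀ h2 (by linear_combination h₁ + h₂), ?_⟩
  rintro rfl
  constructor <;> ring

theorem card_filter_add_inv_eq_le_two {K : Type*} [Field K] {s : Finset K} (hs : 0 ∉ s) (v : K) :
    #{σ ∈ s | σ + σ⁻¹ = v} ≤ 2 := by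
  rcases (s.filter (fun σ => σ + σ⁻¹ = v)).eq_empty_or_nonempty with h | ⟨σ₀, hσ₀⟩
  · simp [h]
  refine (card_le_card fun σ hσ => ?_).trans (card_le_two (a := σ₀) (b := σ₀⁻¹))
  rw [mem_filter] at hσ hσ₀
  have hσ0 : σ ≠ 0 := ne_of_mem_of_not_mem hσ.1 hs
  have hσ₀0 : σ₀ ≠ 0 := ne_of_mem_of_not_mem hσ₀.1 hs
  have h : (σ - σ₀) * (σ - σ₀⁻¹) = 0 := by
    linear_combination σ * hσ.2 - σ * hσ₀.2 + mul_inv_cancel₀ hσ₀0 - mul_inv_cancel₀ hσ0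
  rcases mul_eq_zero.mp h with h | h <;> simp [sub_eq_zero.mp h]

theorem IsAlgClosed.exists_sq_add_inv_sq_eq {K : Type*} [Field K] [IsAlgClosed K] (c : K) :
    ∃ δ : K, δ ≠ 0 ∧ δ ^ 2 + δ⁻¹ ^ 2 = c := by
  obtain ⟨δ, hδ⟩ := IsAlgClosed.exists_root (X ^ 4 - C c * X ^ 2 + 1 : K[X])
    (ne_of_eq_of_ne (b := 4) (by compute_degree!) (by decide))
  simp only [IsRoot, eval_add, eval_sub, eval_mul, eval_pow, eval_X, eval_C, eval_one] at hδ
  have hδ0 : δ ≠ 0 := by rintro rfl; norm_num at hδ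
  exact ⟨δ, hδ0, by field_simp; linear_combination hδ⟩

theorem IsAlgClosed.card_nthRootsFinset {K : Type*} [Field K] [IsAlgClosed K] {n : ℕ}
    (hn : (n : K) ≠ 0) {a : K} (ha : a ≠ 0) : #(nthRootsFinset n a) = n := by
  rw [nthRootsFinset_def, nthRoots, Multiset.toFinset_card_of_nodup
    (nodup_roots (separable_X_pow_sub_C a hn ha)), IsAlgClosed.card_roots_eq_natDegree,
    natDegree_X_pow_sub_C]

section FiniteField

variable {F : Type*} [Field F] [Fintype F] {K : Type*} [Field K] [Algebra F K]

theorem FiniteField.mem_range_algebraMap_of_pow_card_eq_self {x : K}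
    (hx : x ^ Fintype.card F = x) : x ∈ (algebraMap F K).range := by
  have hroots := roots_map_of_injective_of_card_eq_natDegree (algebraMap F K).injective
    (p := X ^ Fintype.card F - X) (by
      rw [roots_X_pow_card_sub_X, X_pow_card_sub_X_natDegree_eq F Fintype.one_lt_card]; rfl)
  have hx' : x ∈ (map (algebraMap F K) (X ^ Fintype.card F - X)).roots := by
    rw [mem_roots ((Polynomial.map_ne_zero_iff (algebraMap F K).injective).mpr
      (X_pow_card_sub_X_ne_zero F Fintype.one_lt_card))]
    simp [hx]
  rw [← hroots, roots_X_pow_card_sub_X] at hx'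
  obtain ⟨u, -, rfl⟩ := Multiset.mem_map.mp hx'
  exact ⟨u, rfl⟩

theorem FiniteField.not_isSquare_iff_pow_card_eq_neg (hF : ringChar F ≠ 2) {u : F} {r : K}
    (hr : r ^ 2 = algebraMap F K u) : ¬IsSquare u ↔ r ≠ 0 ∧ r ^ Fintype.card F = -r := by
  rcases eq_or_ne r 0 with rfl | hr0
  · have hu : u = 0 := by simpa using hr.symm
    simp [hu]
  have hu : u ≠ 0 := by rintro rfl; simp [hr0] at hr
  have h2 : (2 : K) ≠ 0 := Ring.two_ne_zero (Algebra.ringChar_eq F K ▸ hF)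
  have hq : 2 * (Fintype.card F / 2) + 1 = Fintype.card F := by
    have := FiniteField.odd_card_of_char_ne_two hF; omega
  have hpow : r ^ Fintype.card F = r * algebraMap F K (u ^ (Fintype.card F / 2)) := by
    rw [map_pow, ← hr, ← pow_mul, ← pow_succ', hq]
  rw [and_iff_right hr0, FiniteField.isSquare_iff hF hu, hpow]
  rcases FiniteField.pow_dichotomy hF hu with h | h
  · simp only [h, map_one, mul_one, not_true_eq_false, false_iff]
    intro hr'
    exact hr0 ((mul_eq_zero.mp (by linear_combination hr' : (2 : K) * r = 0)).resolve_left h2)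
  · simp [h, Ring.neg_one_ne_one_of_char_ne_two hF]

theorem FiniteField.add_inv_pow_card (x : K) :
    (x + x⁻¹) ^ Fintype.card F = x ^ Fintype.card F + (x ^ Fintype.card F)⁻¹ := by
  simpa using map_add (FiniteField.frobeniusAlgHom F K) x x⁻¹

theorem FiniteField.sub_inv_pow_card (x : K) :
    (x - x⁻¹) ^ Fintype.card F = x ^ Fintype.card F - (x ^ Fintype.card F)⁻¹ := by
  simpa using map_sub (FiniteField.frobeniusAlgHom F K) x x⁻¹

end FiniteField

namespace ProdNonsquares

noncomputable def twoPmNonsquares (F : Type*) [Field F] [Fintype F] : Finset F :=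
  {t | ¬IsSquare (2 + t) ∧ ¬IsSquare (2 - t)}

variable {F : Type*} [Field F] [Fintype F] {k : ℕ}

theorem pos_of_card_eq (hk : Fintype.card F = 4 * k + 1 ∨ Fintype.card F + 1 = 4 * k) : 0 < k := by
  have := Fintype.one_lt_card (α := F); omega

theorem ringChar_ne_two (hk : Fintype.card F = 4 * k + 1 ∨ Fintype.card F + 1 = 4 * k) :
    ringChar F ≠ 2 := by
  rw [Ne, FiniteField.even_card_iff_char_two]; omega

section

variable {K : Type*} [Field K] [Algebra F K]

theorem pow_card_eq_neg_and_pow_card_eq_neg_iff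
    (hk : Fintype.card F = 4 * k + 1 ∨ Fintype.card F + 1 = 4 * k)
    {δ ι : K} (hδ : δ ≠ 0) (hι : ι ^ 2 = -1) :
    (δ + δ⁻¹) ^ Fintype.card F = -(δ + δ⁻¹) ∧
      (ι * (δ - δ⁻¹)) ^ Fintype.card F = -(ι * (δ - δ⁻¹)) ↔ δ ^ (4 * k) = -1 := by
  have h2 : (2 : K) ≠ 0 := Ring.two_ne_zero (Algebra.ringChar_eq F K ▸ ringChar_ne_two hk)
  have hι0 : ι ≠ 0 := by rintro rfl; norm_num at hι
  rw [FiniteField.add_inv_pow_card, mul_pow, FiniteField.sub_inv_pow_card]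
  rcases hk with hq | hq
  · have hιq : ι ^ Fintype.card F = ι := by
      rw [hq, pow_succ, pow_mul, show ι ^ 4 = (ι ^ 2) ^ 2 by ring, hι]; norm_num
    rw [hιq, ← mul_neg, mul_right_inj' hι0, add_inv_eq_neg_and_sub_inv_eq_neg_iff h2, hq, pow_succ,
      ← neg_one_mul δ, mul_left_inj' hδ]
  -- Now `δ ^ q = -δ⁻¹` takes the place of `δ ^ q = -δ`, so the same identity applies to `δ⁻¹`.
  · have hιq : ι ^ Fintype.card F = -ι := by
      refine mul_right_cancel₀ hι0 ?_
      rw [← pow_succ, hq, pow_mul, show ι ^ 4 = (ι ^ 2) ^ 2 by ring, hι]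
      linear_combination hι
    rw [hιq, show -(ι * (δ - δ⁻¹)) = -ι * -(δ⁻¹ - δ⁻¹⁻¹) by rw [inv_inv]; ring,
      mul_right_inj' (neg_ne_zero.mpr hι0), show -(δ + δ⁻¹) = -(δ⁻¹ + δ⁻¹⁻¹) by rw [inv_inv]; ring,
      add_inv_eq_neg_and_sub_inv_eq_neg_iff h2, ← hq, pow_succ, ← eq_mul_inv_iff_mul_eq₀ hδ,
      neg_one_mul]

theorem mem_twoPmNonsquares_iff [IsAlgClosed K]
    (hk : Fintype.card F = 4 * k + 1 ∨ Fintype.card F + 1 = 4 * k)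
    {δ : K} (hδ : δ ≠ 0) {t : F} (ht : algebraMap F K t = δ ^ 2 + δ⁻¹ ^ 2) :
    t ∈ twoPmNonsquares F ↔ δ ^ (4 * k) = -1 := by
  have hF := ringChar_ne_two hk
  obtain ⟨ι, hι⟩ := IsAlgClosed.exists_pow_nat_eq (-1 : K) two_pos
  have hr : (δ + δ⁻¹) ^ 2 = algebraMap F K (2 + t) := by
    rw [map_add, map_ofNat, ht]; field_simp; ring
  have hs : (ι * (δ - δ⁻¹)) ^ 2 = algebraMap F K (2 - t) := by
    rw [map_sub, map_ofNat, ht, mul_pow, hι]; field_simp; ring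
  have hr0 : δ ^ 4 ≠ 1 → δ + δ⁻¹ ≠ 0 := fun h4 h0 => h4 (by
    field_simp at h0; linear_combination (δ ^ 2 - 1) * h0)
  have hs0 : δ ^ 4 ≠ 1 → ι * (δ - δ⁻¹) ≠ 0 := fun h4 h0 => h4 (by
    rcases mul_eq_zero.mp h0 with h0 | h0
    · rw [h0] at hι; norm_num at hι
    · field_simp at h0; linear_combination (δ ^ 2 + 1) * h0)
  have hδ4 : δ ^ (4 * k) = -1 → δ ^ 4 ≠ 1 := fun h h4 =>
    Ring.two_ne_zero (Algebra.ringChar_eq F K ▸ hF) (by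
      rw [pow_mul, h4, one_pow] at h; linear_combination h)
  have key := pow_card_eq_neg_and_pow_card_eq_neg_iff hk hδ hι
  simp only [twoPmNonsquares, mem_filter, mem_univ, true_and,
    FiniteField.not_isSquare_iff_pow_card_eq_neg hF hr,
    FiniteField.not_isSquare_iff_pow_card_eq_neg hF hs]
  constructor
  · rintro ⟨⟨-, h₁⟩, -, h₂⟩
    exact key.1 ⟨h₁, h₂⟩
  · intro h
    exact ⟨⟨hr0 (hδ4 h), (key.2 h).1⟩, ⟨hs0 (hδ4 h), (key.2 h).2⟩⟩

end

theorem dickson_eval_eq_zero_of_mem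
    (hk : Fintype.card F = 4 * k + 1 ∨ Fintype.card F + 1 = 4 * k)
    {t : F} (ht : t ∈ twoPmNonsquares F) : (dickson 1 (1 : F) k).eval t = 0 := by
  obtain ⟨δ, hδ, hδt⟩ := IsAlgClosed.exists_sq_add_inv_sq_eq (algebraMap F (AlgebraicClosure F) t)
  have h := (mem_twoPmNonsquares_iff hk hδ hδt.symm).mp ht
  apply (algebraMap F (AlgebraicClosure F)).injective
  rw [map_zero, ← eval₂_at_apply, ← eval_map, map_dickson, map_one, ← hδt, inv_pow,
    dickson_one_one_eval_add_inv _ _ (mul_inv_cancel₀ (pow_ne_zero 2 hδ)), inv_pow, ← pow_mul,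
    inv_eq_of_mul_eq_one_right (b := -δ ^ (2 * k)) (by linear_combination -h), add_neg_cancel]

theorem natCast_two_mul_ne_zero (hk : Fintype.card F = 4 * k + 1 ∨ Fintype.card F + 1 = 4 * k) :
    ((2 * k : ℕ) : F) ≠ 0 := by
  intro h
  have hq := FiniteField.cast_card_eq_zero F
  push_cast at h
  rcases hk with hk | hk <;> have := congrArg (Nat.cast : ℕ → F) hk <;> push_cast at this
  · exact one_ne_zero (show (1 : F) = 0 by linear_combination hq - this - 2 * h)
  · exact one_ne_zero (show (1 : F) = 0 by linear_combination this - hq + 2 * h)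

theorem add_inv_mem_image_twoPmNonsquares {K : Type*} [Field K] [IsAlgClosed K] [Algebra F K]
    (hk : Fintype.card F = 4 * k + 1 ∨ Fintype.card F + 1 = 4 * k)
    {σ : K} (hσ : σ ^ (2 * k) = -1) :
    σ + σ⁻¹ ∈ (twoPmNonsquares F).image (algebraMap F K) := by
  have hσ4 : σ ^ (4 * k) = 1 := by
    rw [show 4 * k = 2 * k * 2 by ring, pow_mul, hσ]; norm_num
  have hfix : (σ + σ⁻¹) ^ Fintype.card F = σ + σ⁻¹ := by
    rw [FiniteField.add_inv_pow_card]
    rcases hk with hq | hq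
    · rw [hq, pow_succ, hσ4, one_mul]
    · rw [eq_inv_of_mul_eq_one_left (a := σ ^ _) (b := σ) (by rw [← pow_succ, hq, hσ4]),
        inv_inv, add_comm]
  obtain ⟨t, ht⟩ := FiniteField.mem_range_algebraMap_of_pow_card_eq_self hfix
  obtain ⟨δ, hδ⟩ := IsAlgClosed.exists_pow_nat_eq σ two_pos
  have hσ0 : σ ≠ 0 := by
    rintro rfl
    rw [zero_pow (by have := pos_of_card_eq hk; omega)] at hσ
    norm_num at hσ
  have hδ0 : δ ≠ 0 := by rintro rfl; exact hσ0 (by simp [← hδ])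
  refine mem_image.mpr ⟨t, (mem_twoPmNonsquares_iff hk hδ0 (by rw [ht, ← hδ, inv_pow])).mpr ?_, ht⟩
  rw [show 4 * k = 2 * (2 * k) by ring, pow_mul, hδ, hσ]

theorem le_card_twoPmNonsquares
    (hk : Fintype.card F = 4 * k + 1 ∨ Fintype.card F + 1 = 4 * k) :
    k ≤ #(twoPmNonsquares F) := by
  have hk0 : 0 < 2 * k := by have := pos_of_card_eq hk; omega
  let K := AlgebraicClosure F
  let S := nthRootsFinset (2 * k) (-1 : K)
  have hmemS (σ : K) : σ ∈ S ↔ σ ^ (2 * k) = -1 := mem_nthRootsFinset hk0 _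
  have h0S : 0 ∉ S := by simp [hmemS, hk0.ne']
  have hcardS : #S = 2 * k := by
    refine IsAlgClosed.card_nthRootsFinset ?_ (neg_ne_zero.mpr one_ne_zero)
    rw [← map_natCast (algebraMap F K)]
    exact (_root_.map_ne_zero _).mpr (natCast_two_mul_ne_zero hk)
  have h1 := card_le_mul_card_image_of_maps_to
    (fun σ hσ => add_inv_mem_image_twoPmNonsquares hk ((hmemS σ).mp hσ)) 2
    (fun v _ => card_filter_add_inv_eq_le_two h0S v)
  have h2 := card_image_le (s := twoPmNonsquares F) (f := algebraMap F K)
  omega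

theorem prod_X_sub_C_twoPmNonsquares
    (hk : Fintype.card F = 4 * k + 1 ∨ Fintype.card F + 1 = 4 * k) :
    ∏ t ∈ twoPmNonsquares F, (X - C t) = dickson 1 (1 : F) k := by
  have hD := dickson_monic 1 (1 : F) (pos_of_card_eq hk).ne'
  have hle : (twoPmNonsquares F).val ≤ (dickson 1 (1 : F) k).roots :=
    (Multiset.le_iff_subset (twoPmNonsquares F).nodup).mpr fun t ht =>
      (mem_roots hD.ne_zero).mpr (dickson_eval_eq_zero_of_mem hk ht)
  have hcard : Multiset.card (dickson 1 (1 : F) k).roots ≤ (dickson 1 (1 : F) k).natDegree :=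
    card_roots' _
  have hdeg : (dickson 1 (1 : F) k).natDegree ≤ #(twoPmNonsquares F) :=
    (natDegree_dickson_le 1 1 k).trans (le_card_twoPmNonsquares hk)
  have hroots := Multiset.eq_of_le_of_card_le hle (hcard.trans hdeg)
  rw [prod_eq_multiset_prod, hroots, prod_multiset_X_sub_C_of_monic_of_roots_card_eq hD
    (le_antisymm hcard (hdeg.trans (by rw [← hroots]; rfl)))]

end ProdNonsquares

/-- The product of all nonzero `a ∈ F_q` such that both `1 - a` and
`a + 3` are nonsquares in `F_q` equals `2` if `q ≡ ±1 (mod 12)`, and `-1` otherwise. -/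
theorem prod_nonsquares_mod_twelve {F : Type*} [Field F] [Fintype F]
    (hq : Odd (Fintype.card F)) :
    ∏ a ∈ Finset.univ.filter
        (fun a : F => a ≠ 0 ∧ ¬ IsSquare (1 - a) ∧ ¬ IsSquare (a + 3)), a =
      if Fintype.card F % 12 = 1 ∨ Fintype.card F % 12 = 11 then (2 : F) else -1 := by
  set k := (Fintype.card F + 1) / 4
  have hk : Fintype.card F = 4 * k + 1 ∨ Fintype.card F + 1 = 4 * k := by
    have := Nat.odd_iff.mp hq; omega
  have hmem (a : F) : (a ≠ 0 ∧ ¬IsSquare (1 - a) ∧ ¬IsSquare (a + 3)) ↔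
      -1 - a ∈ ProdNonsquares.twoPmNonsquares F := by
    rw [ProdNonsquares.twoPmNonsquares, mem_filter, show 2 + (-1 - a) = 1 - a by ring,
      show 2 - (-1 - a) = a + 3 by ring, and_iff_right (mem_univ _), and_iff_right_of_imp]
    rintro ⟨h, -⟩ rfl
    exact h (by simp)
  calc ∏ a ∈ univ.filter (fun a : F => a ≠ 0 ∧ ¬IsSquare (1 - a) ∧ ¬IsSquare (a + 3)), a
      = ∏ t ∈ ProdNonsquares.twoPmNonsquares F, (-1 - t) :=
        prod_equiv (Equiv.subLeft (-1)) (by simpa using hmem) (by simp)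
    _ = (dickson 1 (1 : F) k).eval (-1) := by
        rw [← ProdNonsquares.prod_X_sub_C_twoPmNonsquares hk, eval_prod]; simp
    _ = _ := by
        rw [dickson_one_one_eval_neg_one]
        exact if_congr (by omega) rfl rfl
end

section
/- Suppose s, t ∈ F_q are nonzero and s^2 + t^2 = 4. Then the product of all a ∈ F_q such that both s^2 - a and t^2 + a are nonsquares in F_q equals χ(2 + s) · 2, and also equals χ(2) · χ(2 + t) · 2. -/
open scoped Classical

/-!
After the substitution `x = s² - a` the product runs over the nonsquares `x` with `4 - x` also a
nonsquare. The nonsquares are the roots of `X ^ ((q-1)/2) + 1`, so the product of `s² - x` over all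
nonsquares is `(s²) ^ ((q-1)/2) + 1 = 2`. The complementary part, over nonsquares `x = 4 - y²`,
pairs `y` with `-y` and becomes `±∏ (t - y)` over the `y` with `4 - y²` a nonsquare. The Möbius map
`v ↦ 2(v-1)/(v+1)` parametrizes these `y` by the nonsquares `v ≠ -1`, which evaluates the product
to `(t - 2) ^ ((q-1)/2)`. With the sign `(-1) ^ ⌊q/4⌋` this is `χ(2) χ(2+t)`, and
`χ(2+s) = χ(2) χ(2+t)` because `2 (2+s) (2+t) = (s+t+2)²`.
-/

section

open Polynomial
open scoped Finset

theorem isSquare_sq_mul_iff {K : Type*} [Field K] {c : K} (hc : c ≠ 0) (x : K) :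
    IsSquare (c ^ 2 * x) ↔ IsSquare x := by
  refine ⟨fun ⟨r, hr⟩ => ⟨r / c, ?_⟩, fun ⟨r, hr⟩ => ⟨c * r, by rw [hr]; ring⟩⟩
  field_simp
  linear_combination hr

theorem two_add_ne_zero_of_sq_add_sq_eq_four {K : Type*} [Field K] {s t : K} (hs : s ≠ 0)
    (hst : s ^ 2 + t ^ 2 = 4) : 2 + t ≠ 0 := fun h =>
  hs (pow_eq_zero_iff two_ne_zero |>.1 (by linear_combination hst + (2 - t) * h))

variable {F : Type*} [Field F] [Fintype F]

theorem pow_card_div_two_eq_neg_one_iff (hF : ringChar F ≠ 2) {a : F} :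
    a ^ (Fintype.card F / 2) = -1 ↔ ¬IsSquare a := by
  rcases eq_or_ne a 0 with rfl | ha
  · simp [zero_pow (Nat.div_pos Fintype.one_lt_card two_pos).ne']
  rw [FiniteField.isSquare_iff hF ha]
  rcases FiniteField.pow_dichotomy hF ha with h | h <;>
    simp [h, Ring.neg_one_ne_one_of_char_ne_two hF, (Ring.neg_one_ne_one_of_char_ne_two hF).symm]

theorem cast_χ (hF : ringChar F ≠ 2) (a : F) : ((χ a : ℤ) : F) = a ^ (Fintype.card F / 2) := by
  rw [← quadraticChar_eq_pow_of_char_ne_two' hF]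
  rfl

theorem sq_pow_card_div_two (hF : ringChar F ≠ 2) {a : F} (ha : a ≠ 0) :
    (a ^ 2) ^ (Fintype.card F / 2) = 1 := by
  rw [← quadraticChar_eq_pow_of_char_ne_two' hF, quadraticChar_sq_one' ha, Int.cast_one]

theorem pow_card_div_two_sq (hF : ringChar F ≠ 2) {a : F} (ha : a ≠ 0) :
    (a ^ (Fintype.card F / 2)) ^ 2 = 1 := by
  rw [← pow_mul, pow_mul', sq_pow_card_div_two hF ha]

theorem two_pow_card_div_two (hF : ringChar F ≠ 2) :
    (2 : F) ^ (Fintype.card F / 2) = (-1) ^ (Fintype.card F / 4 + Fintype.card F / 2) := by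
  have hodd := FiniteField.odd_card_of_char_ne_two hF
  by_cases h2 : IsSquare (2 : F)
  · rw [(FiniteField.isSquare_iff hF (Ring.two_ne_zero hF)).1 h2, Even.neg_one_pow]
    rw [FiniteField.isSquare_two_iff] at h2
    rw [Nat.even_iff]; omega
  · rw [(pow_card_div_two_eq_neg_one_iff hF).2 h2, Odd.neg_one_pow]
    rw [FiniteField.isSquare_two_iff] at h2
    rw [Nat.odd_iff]; omega

variable (F) in
noncomputable def nonsquares : Finset F := {a | ¬IsSquare a}

theorem X_pow_card_div_two_add_one_dvd (hF : ringChar F ≠ 2) :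
    (X ^ (Fintype.card F / 2) + 1 : F[X]) ∣ X ^ Fintype.card F - X := by
  refine ⟨X * (X ^ (Fintype.card F / 2) - 1), ?_⟩
  conv_lhs => rw [← Nat.two_mul_div_two_add_one_of_odd
    (Nat.odd_iff.2 (FiniteField.odd_card_of_char_ne_two hF))]
  ring

theorem monic_X_pow_card_div_two_add_one : (X ^ (Fintype.card F / 2) + 1 : F[X]).Monic := by
  simpa using monic_X_pow_add_C (1 : F) (Nat.div_pos Fintype.one_lt_card two_pos).ne'

theorem splits_X_pow_card_div_two_add_one (hF : ringChar F ≠ 2) :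
    (X ^ (Fintype.card F / 2) + 1 : F[X]).Splits := by
  have hq := FiniteField.X_pow_card_sub_X_ne_zero F (Fintype.one_lt_card (α := F))
  refine Splits.of_dvd (splits_iff_card_roots.2 ?_) hq (X_pow_card_div_two_add_one_dvd hF)
  rw [FiniteField.roots_X_pow_card_sub_X, FiniteField.X_pow_card_sub_X_natDegree_eq F
    Fintype.one_lt_card]
  rfl

theorem roots_X_pow_card_div_two_add_one (hF : ringChar F ≠ 2) :
    (X ^ (Fintype.card F / 2) + 1 : F[X]).roots = (nonsquares F).val := by
  have hq := FiniteField.X_pow_card_sub_X_ne_zero F (Fintype.one_lt_card (α := F))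
  have hnodup : (X ^ (Fintype.card F / 2) + 1 : F[X]).roots.Nodup :=
    Multiset.nodup_of_le (roots.le_of_dvd hq (X_pow_card_div_two_add_one_dvd hF))
      (FiniteField.roots_X_pow_card_sub_X F ▸ Finset.univ.nodup)
  rw [← hnodup.dedup, ← Multiset.toFinset_val]
  congr 1
  ext v
  simp [nonsquares, mem_roots monic_X_pow_card_div_two_add_one.ne_zero,
    ← pow_card_div_two_eq_neg_one_iff hF, eq_neg_iff_add_eq_zero]

theorem card_nonsquares (hF : ringChar F ≠ 2) : #(nonsquares F) = Fintype.card F / 2 := by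
  calc #(nonsquares F) = Multiset.card (X ^ (Fintype.card F / 2) + 1 : F[X]).roots := by
        rw [roots_X_pow_card_div_two_add_one hF, Finset.card_def]
    _ = Fintype.card F / 2 := by
        rw [← (splits_X_pow_card_div_two_add_one hF).natDegree_eq_card_roots, ← C_1,
          natDegree_X_pow_add_C]

theorem prod_sub_nonsquares (hF : ringChar F ≠ 2) (c : F) :
    ∏ v ∈ nonsquares F, (c - v) = c ^ (Fintype.card F / 2) + 1 := by
  have := (splits_X_pow_card_div_two_add_one hF).eval_eq_prod_roots_of_monic
    monic_X_pow_card_div_two_add_one c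
  rw [roots_X_pow_card_div_two_add_one hF, eval_add, eval_pow, eval_X, eval_one] at this
  rw [Finset.prod_eq_multiset_prod, this]

/-- The left side is the derivative of `X ^ (q / 2) + 1` at its root `-1`. -/
theorem prod_erase_neg_one_sub_nonsquares (hF : ringChar F ≠ 2) (h : ¬IsSquare (-1 : F)) :
    ∏ v ∈ (nonsquares F).erase (-1), (-1 - v) = ((Fintype.card F / 2 : ℕ) : F) := by
  have hmem : (-1 : F) ∈ (X ^ (Fintype.card F / 2) + 1 : F[X]).roots := by
    simpa [roots_X_pow_card_div_two_add_one hF, nonsquares] using h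
  have := (splits_X_pow_card_div_two_add_one hF).eval_root_derivative
    monic_X_pow_card_div_two_add_one hmem
  rw [roots_X_pow_card_div_two_add_one hF, ← Finset.erase_val] at this
  have heven : Even (Fintype.card F / 2 - 1) := by
    have := FiniteField.isSquare_neg_one_iff.not.1 h
    rw [Nat.even_iff]; omega
  rw [Finset.prod_eq_multiset_prod, ← this, derivative_add, derivative_one, add_zero,
    derivative_X_pow, eval_mul, eval_C, eval_pow, eval_X, heven.neg_one_pow, mul_one]

theorem mem_erase_neg_one_nonsquares {v : F} :
    v ∈ (nonsquares F).erase (-1) ↔ v + 1 ≠ 0 ∧ ¬IsSquare v := by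
  simp [nonsquares, add_eq_zero_iff_eq_neg]

/-- Since `4 - y² = (2 - y)² · (2 + y) / (2 - y)`, the inverse map `y ↦ (2 + y) / (2 - y)` keeps
the square class; `-1` is the image of the point at infinity. -/
theorem bijOn_mobius (hF : ringChar F ≠ 2) :
    Set.BijOn (fun v : F => 2 * (v - 1) / (v + 1)) ↑((nonsquares F).erase (-1))
      ↑({y | ¬IsSquare (4 - y ^ 2)} : Finset F) := by
  have h4 : (4 : F) ≠ 0 := by
    simpa [show (4 : F) = 2 ^ 2 by norm_num] using Ring.two_ne_zero hF
  have hsub : ∀ {y : F}, ¬IsSquare (4 - y ^ 2) → 2 - y ≠ 0 := fun {y} hy h =>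
    hy ⟨0, by linear_combination (2 + y) * h⟩
  refine Set.InvOn.bijOn (f' := fun y => (2 + y) / (2 - y)) ⟨fun v hv => ?_, fun y hy => ?_⟩
    (fun v hv => ?_) (fun y hy => ?_)
  · simp only [Finset.mem_coe, mem_erase_neg_one_nonsquares] at hv
    have := hv.1
    dsimp only
    rw [show 2 - 2 * (v - 1) / (v + 1) = 4 / (v + 1) by field_simp; ring]
    field_simp
    ring
  · simp only [Finset.mem_coe, Finset.mem_filter_univ] at hy
    have := hsub hy
    dsimp only
    rw [show (2 + y) / (2 - y) + 1 = 4 / (2 - y) by field_simp; ring]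
    field_simp
    ring
  · simp only [Finset.mem_coe, mem_erase_neg_one_nonsquares, Finset.mem_filter_univ] at hv ⊢
    have := hv.1
    rw [show 4 - (2 * (v - 1) / (v + 1)) ^ 2 = (4 / (v + 1)) ^ 2 * v by field_simp; ring,
      isSquare_sq_mul_iff (div_ne_zero h4 hv.1)]
    exact hv.2
  · simp only [Finset.mem_coe, mem_erase_neg_one_nonsquares, Finset.mem_filter_univ] at hy ⊢
    have := hsub hy
    refine ⟨fun h => h4 ?_, fun h => hy ?_⟩
    · field_simp at h
      linear_combination h
    · rw [show 4 - y ^ 2 = (2 - y) ^ 2 * ((2 + y) / (2 - y)) by field_simp; ring,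
        isSquare_sq_mul_iff this]
      exact h

theorem card_filter_not_isSquare_four_sub_sq (hF : ringChar F ≠ 2) :
    #({y | ¬IsSquare (4 - y ^ 2)} : Finset F) = 2 * (Fintype.card F / 4) := by
  have hodd := FiniteField.odd_card_of_char_ne_two hF
  rw [← (bijOn_mobius hF).finsetCard_eq]
  by_cases h : IsSquare (-1 : F)
  · have := FiniteField.isSquare_neg_one_iff.1 h
    rw [Finset.erase_eq_of_notMem (by simp [nonsquares, h]), card_nonsquares hF]
    omega
  · have := FiniteField.isSquare_neg_one_iff.not.1 h
    rw [Finset.card_erase_of_mem (by simp [nonsquares, h]), card_nonsquares hF]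
    omega

theorem prod_sub_mul_prod_neg_one_sub (hF : ringChar F ≠ 2) {t : F} (h2t : 2 - t ≠ 0) :
    (∏ y ∈ ({y | ¬IsSquare (4 - y ^ 2)} : Finset F), (t - y)) *
        ∏ v ∈ (nonsquares F).erase (-1), (-1 - v) =
      (t - 2) ^ #((nonsquares F).erase (-1)) *
        ∏ v ∈ (nonsquares F).erase (-1), ((2 + t) / (2 - t) - v) := by
  have hφ := bijOn_mobius hF
  rw [← Finset.prod_nbij _ hφ.mapsTo hφ.injOn hφ.surjOn (fun _ _ => rfl), ← Finset.prod_mul_distrib,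
    ← Finset.prod_const, ← Finset.prod_mul_distrib]
  refine Finset.prod_congr rfl fun v hv => ?_
  have := (mem_erase_neg_one_nonsquares.1 hv).1
  field_simp
  ring

theorem prod_sub_filter_not_isSquare_four_sub_sq (hF : ringChar F ≠ 2) {s t : F} (hs : s ≠ 0)
    (hst : s ^ 2 + t ^ 2 = 4) :
    ∏ y ∈ ({y | ¬IsSquare (4 - y ^ 2)} : Finset F), (t - y) = (t - 2) ^ (Fintype.card F / 2) := by
  have hodd := FiniteField.odd_card_of_char_ne_two hF
  have h2t : 2 - t ≠ 0 := fun h => hs (pow_eq_zero_iff two_ne_zero |>.1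
    (by linear_combination hst + (2 + t) * h))
  have hd : ((2 + t) / (2 - t)) ^ (Fintype.card F / 2) = 1 := by
    rw [show (2 + t) / (2 - t) = (s / (2 - t)) ^ 2 by field_simp; linear_combination -hst]
    exact sq_pow_card_div_two hF (div_ne_zero hs h2t)
  have key := prod_sub_mul_prod_neg_one_sub hF h2t
  set R := ∏ y ∈ ({y | ¬IsSquare (4 - y ^ 2)} : Finset F), (t - y)
  by_cases h : IsSquare (-1 : F)
  · have heven : Even (Fintype.card F / 2) := by
      have := FiniteField.isSquare_neg_one_iff.1 h
      rw [Nat.even_iff]; omega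
    rw [Finset.erase_eq_of_notMem (by simp [nonsquares, h]), prod_sub_nonsquares hF,
      prod_sub_nonsquares hF, card_nonsquares hF, hd, heven.neg_one_pow] at key
    exact mul_right_cancel₀ (Ring.two_ne_zero hF) (by linear_combination key)
  · have hmem : (-1 : F) ∈ nonsquares F := by simp [nonsquares, h]
    have hprod : 2 * ∏ v ∈ (nonsquares F).erase (-1), ((2 + t) / (2 - t) - v) = 2 - t := by
      have := Finset.mul_prod_erase _ (fun v => (2 + t) / (2 - t) - v) hmem
      rw [prod_sub_nonsquares hF, hd, show (2 + t) / (2 - t) - -1 = 4 / (2 - t) by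
        field_simp; ring] at this
      generalize ∏ v ∈ (nonsquares F).erase (-1), ((2 + t) / (2 - t) - v) = P at this ⊢
      field_simp at this
      exact mul_left_cancel₀ (Ring.two_ne_zero hF) (by linear_combination this)
    have hm : 2 * ((Fintype.card F / 2 : ℕ) : F) + 1 = 0 := by
      have := FiniteField.cast_card_eq_zero F
      rw [← Nat.two_mul_div_two_add_one_of_odd (Nat.odd_iff.2 hodd)] at this
      exact_mod_cast this
    rw [prod_erase_neg_one_sub_nonsquares hF h, Finset.card_erase_of_mem hmem,
      card_nonsquares hF] at key
    rw [← Nat.sub_add_cancel (Nat.div_pos Fintype.one_lt_card two_pos : 0 < Fintype.card F / 2),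
      pow_succ]
    linear_combination R * hm - 2 * key - (t - 2) ^ (Fintype.card F / 2 - 1) * hprod

theorem filter_sq_eq_eq_pair (hF : ringChar F ≠ 2) {p : F → Prop} [DecidablePred p] (hp : ¬p 0)
    {z : F} (hz : p z ∧ IsSquare z) :
    ∃ r, r ≠ -r ∧ r ^ 2 = z ∧ ({y | p (y ^ 2)} : Finset F).filter (· ^ 2 = z) = {r, -r} := by
  obtain ⟨hpz, r, rfl⟩ := hz
  have hr : r ≠ 0 := by rintro rfl; simp_all
  refine ⟨r, fun h => hr ((Ring.eq_self_iff_eq_zero_of_char_ne_two hF).1 h.symm), sq r, ?_⟩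
  ext y
  simp only [Finset.mem_filter, Finset.mem_insert, Finset.mem_singleton,
    ← sq, sq_eq_sq_iff_eq_or_eq_neg]
  constructor
  · exact And.right
  · rintro (rfl | rfl) <;> simpa [sq] using hpz

theorem prod_sub_filter_sq (hF : ringChar F ≠ 2) {p : F → Prop} [DecidablePred p] (hp : ¬p 0)
    (t : F) :
    ∏ y ∈ ({y | p (y ^ 2)} : Finset F), (t - y) =
      ∏ z ∈ ({z | p z ∧ IsSquare z} : Finset F), (t ^ 2 - z) := by
  rw [← Finset.prod_fiberwise_of_maps_to (g := (· ^ 2)) (t := {z | p z ∧ IsSquare z})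
    fun y hy => Finset.mem_filter_univ _ |>.2 ⟨(Finset.mem_filter_univ y).1 hy, y, sq y⟩]
  refine Finset.prod_congr rfl fun z hz => ?_
  obtain ⟨r, hr, rfl, hfib⟩ := filter_sq_eq_eq_pair hF hp ((Finset.mem_filter_univ z).1 hz)
  rw [hfib, Finset.prod_pair hr]
  ring

theorem card_filter_sq (hF : ringChar F ≠ 2) {p : F → Prop} [DecidablePred p] (hp : ¬p 0) :
    #({y | p (y ^ 2)} : Finset F) = 2 * #({z | p z ∧ IsSquare z} : Finset F) := by
  rw [Finset.card_eq_sum_card_fiberwise (f := (· ^ 2)) (t := {z | p z ∧ IsSquare z})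
    fun y hy => Finset.mem_filter_univ _ |>.2 ⟨(Finset.mem_filter_univ y).1 hy, y, sq y⟩,
    mul_comm, ← smul_eq_mul, ← Finset.sum_const]
  refine Finset.sum_congr rfl fun z hz => ?_
  obtain ⟨r, hr, rfl, hfib⟩ := filter_sq_eq_eq_pair hF hp ((Finset.mem_filter_univ z).1 hz)
  rw [hfib, Finset.card_pair hr]

theorem prod_filter_not_isSquare_sub (hF : ringChar F ≠ 2) (c : F) :
    ∏ a ∈ ({a | ¬IsSquare (c - a)} : Finset F), a = c ^ (Fintype.card F / 2) + 1 := by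
  rw [← prod_sub_nonsquares hF]
  refine Finset.prod_nbij' (c - ·) (c - ·) ?_ ?_ ?_ ?_ ?_ <;> simp [nonsquares]

theorem prod_filter_not_isSquare_sub_isSquare_add (hF : ringChar F ≠ 2) {s t : F} (hs : s ≠ 0)
    (hst : s ^ 2 + t ^ 2 = 4) :
    ∏ a ∈ ({a | ¬IsSquare (s ^ 2 - a) ∧ IsSquare (t ^ 2 + a)} : Finset F), a =
      2 ^ (Fintype.card F / 2) * (2 + t) ^ (Fintype.card F / 2) := by
  have hp : ¬¬IsSquare (4 - 0 : F) := not_not.2 ⟨2, by norm_num⟩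
  have hreindex : ∏ a ∈ ({a | ¬IsSquare (s ^ 2 - a) ∧ IsSquare (t ^ 2 + a)} : Finset F), a =
      ∏ z ∈ ({z | ¬IsSquare (4 - z) ∧ IsSquare z} : Finset F), -(t ^ 2 - z) := by
    refine Finset.prod_nbij' (t ^ 2 + ·) (· - t ^ 2) ?_ ?_ ?_ ?_ ?_ <;>
      simp [show s ^ 2 = 4 - t ^ 2 by linear_combination hst, sub_sub]
  have hcard : #({z | ¬IsSquare (4 - z) ∧ IsSquare z} : Finset F) = Fintype.card F / 4 := by
    have := card_filter_sq hF (p := fun z => ¬IsSquare (4 - z)) hp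
    rw [card_filter_not_isSquare_four_sub_sq hF] at this
    omega
  have h2t := two_add_ne_zero_of_sq_add_sq_eq_four hs hst
  have hY := pow_card_div_two_sq hF h2t
  have hXY : (t - 2) ^ (Fintype.card F / 2) * (2 + t) ^ (Fintype.card F / 2) =
      (-1) ^ (Fintype.card F / 2) := by
    rw [← mul_pow, show (t - 2) * (2 + t) = -1 * s ^ 2 by linear_combination hst, mul_pow,
      sq_pow_card_div_two hF hs, mul_one]
  -- `(-1) ^ (q / 4) = χ(2) χ(-1)` and `χ(t - 2) χ(2 + t) = χ(-s²) = χ(-1)`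
  rw [hreindex, Finset.prod_neg, hcard, ← prod_sub_filter_sq hF hp,
    prod_sub_filter_not_isSquare_four_sub_sq hF hs hst, two_pow_card_div_two hF, pow_add]
  linear_combination (-(-1 : F) ^ (Fintype.card F / 4) * (t - 2) ^ (Fintype.card F / 2)) * hY
    + (-1 : F) ^ (Fintype.card F / 4) * (2 + t) ^ (Fintype.card F / 2) * hXY

theorem two_add_pow_card_div_two (hF : ringChar F ≠ 2) {s t : F} (hs : s ≠ 0) (ht : t ≠ 0)
    (hst : s ^ 2 + t ^ 2 = 4) :
    (2 + s) ^ (Fintype.card F / 2) = 2 ^ (Fintype.card F / 2) * (2 + t) ^ (Fintype.card F / 2) := by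
  have h2s := two_add_ne_zero_of_sq_add_sq_eq_four (s := t) (t := s) ht
    (by linear_combination hst)
  have h2t := two_add_ne_zero_of_sq_add_sq_eq_four hs hst
  have hid : (s + t + 2) ^ 2 = 2 * ((2 + s) * (2 + t)) := by linear_combination hst
  have h0 : s + t + 2 ≠ 0 := fun h =>
    mul_ne_zero (Ring.two_ne_zero hF) (mul_ne_zero h2s h2t) (by rw [← hid, h]; ring)
  have h1 : 2 ^ (Fintype.card F / 2) * ((2 + s) ^ (Fintype.card F / 2) *
      (2 + t) ^ (Fintype.card F / 2)) = (1 : F) := by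
    rw [← mul_pow, ← mul_pow, ← hid]
    exact sq_pow_card_div_two hF h0
  have h3 := pow_card_div_two_sq hF h2s
  linear_combination 2 ^ (Fintype.card F / 2) * (2 + t) ^ (Fintype.card F / 2) * h3
    - (2 + s) ^ (Fintype.card F / 2) * h1

end

/-- Suppose `s, t ∈ F_q` are nonzero and `s² + t² = 4`. Then the product
of all `a ∈ F_q` such that both `s² - a` and `t² + a` are nonsquares equals `χ(2+s)·2`,
and also equals `χ(2)·χ(2+t)·2`. -/
theorem prod_nonsquares_pythagorean {F : Type*} [Field F] [Fintype F]
    (hq : Odd (Fintype.card F)) (s t : F) (hs : s ≠ 0) (ht : t ≠ 0)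
    (hst : s ^ 2 + t ^ 2 = 4) :
    (∏ a ∈ Finset.univ.filter
        (fun a : F => ¬ IsSquare (s ^ 2 - a) ∧ ¬ IsSquare (t ^ 2 + a)), a) =
        ((χ (2 + s) : ℤ) : F) * 2 ∧
    (∏ a ∈ Finset.univ.filter
        (fun a : F => ¬ IsSquare (s ^ 2 - a) ∧ ¬ IsSquare (t ^ 2 + a)), a) =
        ((χ (2 : F) : ℤ) : F) * ((χ (2 + t) : ℤ) : F) * 2 := by
  have hF : ringChar F ≠ 2 := fun h => by
    have := FiniteField.even_card_of_char_two h
    rw [Nat.odd_iff] at hq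
    omega
  have hsplit := Finset.prod_filter_mul_prod_filter_not ({a | ¬IsSquare (s ^ 2 - a)} : Finset F)
    (fun a => ¬IsSquare (t ^ 2 + a)) id
  simp only [Finset.filter_filter, not_not, id] at hsplit
  rw [prod_filter_not_isSquare_sub_isSquare_add hF hs hst, prod_filter_not_isSquare_sub hF,
    sq_pow_card_div_two hF hs] at hsplit
  have hQ := pow_card_div_two_sq hF
    (mul_ne_zero (Ring.two_ne_zero hF) (two_add_ne_zero_of_sq_add_sq_eq_four hs hst))
  rw [mul_pow] at hQ
  rw [cast_χ hF, cast_χ hF, cast_χ hF, two_add_pow_card_div_two hF hs ht hst, and_self]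
  linear_combination 2 ^ (Fintype.card F / 2) * (2 + t) ^ (Fintype.card F / 2) * hsplit
    - (∏ a ∈ Finset.univ.filter
        (fun a : F => ¬ IsSquare (s ^ 2 - a) ∧ ¬ IsSquare (t ^ 2 + a)), a) * hQ
end

section
/- Let S = {b ∈ F_q : 2 - b is a nonsquare in F_q and 2 + b is a nonzero square in F_q}. For every b ∈ S, let c = ∏_{a} (b - a), the product over all a ∈ F_q such that both 2 - a and 2 + a are nonsquares in F_q. Then c ∈ S and c^2 - 2 = b; that is, b ↦ ∏_{a}(b - a) is the inverse of the permutation b ↦ b^2 - 2 of S. -/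
/-!
Let `q = #F`, `h = (q - 1) / 2` (written `q / 2`), and work in an algebraic closure `K` of
`F`. Every `e ∈ F` other than `±2` is `x + x⁻¹` for some `x ∈ K` with `x ^ q = x ^ (±1)`,
i.e. `x ^ (2 * w) = 1` for `w = h` or `w = h + 1`; the Frobenius identity
`(x + s) ^ q = x ^ q + s` for `s = ±1` turns Euler's criterion into `(2 + e) ^ h = x ^ w` and
`(2 - e) ^ h = (-x) ^ w`.

Let `n` and `m` be the odd and the even one of `h, h + 1`. Then `b ∈ S` iff `b = x + x⁻¹`
with `x ^ n = 1`, `x ≠ 1`, and both `2 ± a` are nonsquares iff `a = y + y⁻¹` with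
`y ^ m = -1`. Pairing the `m` roots of `z ^ m = -1` as `{y, y⁻¹}` gives
`∏_a (z ^ 2 - a z + 1) = z ^ m + 1`, so for `b = x + x⁻¹` the product
`c = ∏_a (b - a) = x ^ (-m/2) (x ^ m + 1)` equals `u + u⁻¹` with `u = x ^ (m / 2)`.
As `m = n ± 1`, `u ^ 2 = x ^ m = x ^ (±1)`, hence `c ^ 2 - 2 = u ^ 2 + u ^ (-2) = b`,
while `u ^ n = 1` and `u ≠ 1` put `c` in `S`.
-/

open scoped Classical

open Polynomial Finset

section DivisionMonoid

variable {M : Type*} [DivisionMonoid M]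

theorem pow_eq_self_or_eq_inv_of_pow_two_mul_eq_one {N w : ℕ}
    (hN : Odd N) {x : M} (hw : w = N / 2 ∨ w = N / 2 + 1) (hxw : x ^ (2 * w) = 1) :
    x ^ N = x ∨ x ^ N = x⁻¹ := by
  have hN2 := Nat.two_mul_div_two_add_one_of_odd hN
  rcases hw with rfl | rfl
  · left
    rw [← hN2, pow_succ, hxw, one_mul]
  · right
    refine eq_inv_of_mul_eq_one_left ?_
    rw [← pow_succ, ← hxw]
    congr 1
    omega

theorem pow_eq_self_or_eq_inv_of_pow_eq_one {m n : ℕ} {x : M} (hx : x ^ n = 1)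
    (hmn : m = n + 1 ∨ n = m + 1) : x ^ m = x ∨ x ^ m = x⁻¹ := by
  rcases hmn with rfl | rfl
  · exact .inl (by rw [pow_succ, hx, one_mul])
  · exact .inr (eq_inv_of_mul_eq_one_left (by rw [← pow_succ, hx]))

end DivisionMonoid

theorem exists_odd_and_even_among_self_and_succ (h : ℕ) :
    ∃ n m : ℕ, (n = h ∨ n = h + 1) ∧ (m = h ∨ m = h + 1) ∧ Odd n ∧ Even m := by
  rcases Nat.even_or_odd h with he | ho
  · exact ⟨_, _, .inr rfl, .inl rfl, he.add_one, he⟩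
  · exact ⟨_, _, .inl rfl, .inr rfl, ho, ho.add_one⟩

section Field

variable {K : Type*} [Field K]

theorem eq_or_eq_inv_of_add_inv_eq {x y : K} (hx : x ≠ 0) (hy : y ≠ 0)
    (h : y + y⁻¹ = x + x⁻¹) : y = x ∨ y = x⁻¹ := by
  have : (y - x) * (y - x⁻¹) = 0 := by
    linear_combination y * h + mul_inv_cancel₀ hx - mul_inv_cancel₀ hy
  simpa only [mul_eq_zero, sub_eq_zero] using this

variable {R : Finset K}

theorem filter_add_inv_eq_pair (hR0 : ∀ y ∈ R, y ≠ 0) (hRinv : ∀ y ∈ R, y⁻¹ ∈ R)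
    {y : K} (hy : y ∈ R) : {y' ∈ R | y' + y'⁻¹ = y + y⁻¹} = {y, y⁻¹} := by
  ext y'
  simp only [mem_filter, mem_insert, mem_singleton]
  constructor
  · rintro ⟨hy'R, hy'⟩
    exact eq_or_eq_inv_of_add_inv_eq (hR0 y hy) (hR0 y' hy'R) hy'
  · rintro (rfl | rfl)
    · exact ⟨hy, rfl⟩
    · exact ⟨hRinv y hy, by rw [inv_inv, add_comm]⟩

theorem prod_image_add_inv (hR0 : ∀ y ∈ R, y ≠ 0) (hRinv : ∀ y ∈ R, y⁻¹ ∈ R)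
    (hRne : ∀ y ∈ R, y⁻¹ ≠ y) (z : K) :
    ∏ t ∈ R.image (fun y => y + y⁻¹), (z ^ 2 - t * z + 1) = ∏ y ∈ R, (z - y) := by
  refine prod_image' _ fun y hy => ?_
  rw [filter_add_inv_eq_pair hR0 hRinv hy, prod_pair (hRne y hy).symm]
  linear_combination -mul_inv_cancel₀ (hR0 y hy)

theorem two_mul_card_image_add_inv (hR0 : ∀ y ∈ R, y ≠ 0) (hRinv : ∀ y ∈ R, y⁻¹ ∈ R)
    (hRne : ∀ y ∈ R, y⁻¹ ≠ y) : 2 * #(R.image fun y => y + y⁻¹) = #R := by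
  rw [card_eq_sum_card_image (fun y => y + y⁻¹) R, mul_comm, ← smul_eq_mul, ← sum_const]
  refine sum_congr rfl fun t ht => ?_
  obtain ⟨y, hy, rfl⟩ := mem_image.1 ht
  rw [filter_add_inv_eq_pair hR0 hRinv hy, card_pair (hRne y hy).symm]

theorem prod_add_inv_sub_eq_pow_add_inv {A : Finset K}
    (hA : ∀ z : K, ∏ t ∈ A, (z ^ 2 - t * z + 1) = z ^ (2 * #A) + 1) {x : K} (hx : x ≠ 0) :
    ∏ t ∈ A, (x + x⁻¹ - t) = x ^ #A + (x ^ #A)⁻¹ := by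
  have hxA : x ^ #A ≠ 0 := pow_ne_zero _ hx
  apply mul_left_cancel₀ hxA
  rw [← prod_const, ← prod_mul_distrib, prod_const, mul_add, mul_inv_cancel₀ hxA, ← pow_add,
    ← two_mul, ← hA]
  refine prod_congr rfl fun t _ => ?_
  linear_combination mul_inv_cancel₀ hx

theorem nthRoots_nodup_of_natCast_ne_zero {m : ℕ} (hm : (m : K) ≠ 0) {a : K} (ha : a ≠ 0) :
    (nthRoots m a).Nodup :=
  nodup_roots (separable_X_pow_sub_C a hm ha)

theorem inv_mem_nthRootsFinset {m : ℕ} {a y : K} (hy : y ∈ nthRootsFinset m a) :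
    y⁻¹ ∈ nthRootsFinset m a⁻¹ := by
  rcases m.eq_zero_or_pos with rfl | hm0
  · simp at hy
  rw [mem_nthRootsFinset hm0] at hy ⊢
  rw [inv_pow, hy]

theorem inv_ne_self_of_mem_nthRootsFinset_neg_one {m : ℕ} (hm : (m : K) ≠ 0) (hme : Even m)
    {y : K} (hy : y ∈ nthRootsFinset m (-1 : K)) : y⁻¹ ≠ y := by
  have hm0 : m ≠ 0 := by rintro rfl; exact hm Nat.cast_zero
  rw [mem_nthRootsFinset (Nat.pos_of_ne_zero hm0)] at hy
  intro hyy
  have hy0 : y ≠ 0 := by rintro rfl; simp [zero_pow hm0] at hy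
  have hy2 : y ^ 2 = 1 := by
    rw [sq]
    nth_rewrite 2 [← hyy]
    exact mul_inv_cancel₀ hy0
  obtain ⟨j, rfl⟩ := hme
  rw [← two_mul, pow_mul, hy2, one_pow] at hy
  apply hm
  rw [← two_mul, Nat.cast_mul, Nat.cast_two, show (2 : K) = 0 by linear_combination hy, zero_mul]

theorem add_inv_sq_sub_two {u : K} (hu : u ≠ 0) :
    (u + u⁻¹) ^ 2 - 2 = u ^ 2 + (u ^ 2)⁻¹ := by
  field_simp
  ring

end Field

section IsAlgClosed

variable {K : Type*} [Field K] [IsAlgClosed K]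

theorem exists_add_inv_eq (t : K) : ∃ x : K, x ≠ 0 ∧ x + x⁻¹ = t := by
  have hdeg : (X ^ 2 - C t * X + 1 : K[X]).degree = 2 := by compute_degree!
  obtain ⟨x, hx⟩ := IsAlgClosed.exists_root _ (hdeg ▸ two_ne_zero)
  have hx' : x ^ 2 - t * x + 1 = 0 := by simpa using hx
  have hx0 : x ≠ 0 := by rintro rfl; simp at hx'
  refine ⟨x, hx0, ?_⟩
  field_simp
  linear_combination hx'

theorem card_nthRootsFinset_eq {m : ℕ} (hm : (m : K) ≠ 0) {a : K} (ha : a ≠ 0) :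
    #(nthRootsFinset m a) = m := by
  rw [nthRootsFinset, Multiset.toFinset_card_of_nodup (nthRoots_nodup_of_natCast_ne_zero hm ha),
    nthRoots, (IsAlgClosed.splits _).natDegree_eq_card_roots.symm, natDegree_X_pow_sub_C]

theorem prod_nthRootsFinset_sub {m : ℕ} (hm : (m : K) ≠ 0) {a : K} (ha : a ≠ 0) (z : K) :
    ∏ y ∈ nthRootsFinset m a, (z - y) = z ^ m - a := by
  have hm0 : m ≠ 0 := by rintro rfl; exact hm Nat.cast_zero
  rw [prod_eq_multiset_prod, nthRootsFinset, Multiset.toFinset_val,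
    (nthRoots_nodup_of_natCast_ne_zero hm ha).dedup, nthRoots,
    ← (IsAlgClosed.splits _).eval_eq_prod_roots_of_monic (monic_X_pow_sub_C a hm0)]
  simp

theorem prod_image_nthRootsFinset_neg_one {m : ℕ} (hm : (m : K) ≠ 0) (hme : Even m) (z : K) :
    ∏ t ∈ (nthRootsFinset m (-1 : K)).image (fun y => y + y⁻¹), (z ^ 2 - t * z + 1) =
      z ^ m + 1 := by
  have h1 : (-1 : K) ≠ 0 := neg_ne_zero.2 one_ne_zero
  rw [prod_image_add_inv (fun _ => ne_zero_of_mem_nthRootsFinset h1)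
    (fun _ hy => inv_neg_one (R := K) ▸ inv_mem_nthRootsFinset hy)
    (fun _ => inv_ne_self_of_mem_nthRootsFinset_neg_one hm hme),
    prod_nthRootsFinset_sub hm h1, sub_neg_eq_add]

theorem two_mul_card_image_nthRootsFinset_neg_one {m : ℕ} (hm : (m : K) ≠ 0) (hme : Even m) :
    2 * #((nthRootsFinset m (-1 : K)).image fun y => y + y⁻¹) = m := by
  have h1 : (-1 : K) ≠ 0 := neg_ne_zero.2 one_ne_zero
  rw [two_mul_card_image_add_inv (fun _ => ne_zero_of_mem_nthRootsFinset h1)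
    (fun _ hy => inv_neg_one (R := K) ▸ inv_mem_nthRootsFinset hy)
    (fun _ => inv_ne_self_of_mem_nthRootsFinset_neg_one hm hme),
    card_nthRootsFinset_eq hm h1]

end IsAlgClosed

section FiniteField

variable {F K : Type*} [Field F] [Fintype F] [Field K] [Algebra F K]

local notation "q" => Fintype.card F

theorem pow_card_add (a b : K) : (a + b) ^ q = a ^ q + b ^ q :=
  map_add (FiniteField.frobeniusAlgHom F K) a b

theorem exists_algebraMap_eq_of_pow_card_eq_self {z : K} (hz : z ^ q = z) :
    ∃ a : F, algebraMap F K a = z := by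
  have hsplits : (X ^ q - X : F[X]).Splits := by
    rw [splits_iff_card_roots, FiniteField.roots_X_pow_card_sub_X,
      FiniteField.X_pow_card_sub_X_natDegree_eq F Fintype.one_lt_card]
    rfl
  exact hsplits.mem_range_of_isRoot (FiniteField.X_pow_card_sub_X_ne_zero F Fintype.one_lt_card)
    (by simp [hz])

theorem pow_card_eq_or_eq_inv {e : F} {x : K} (hx : x ≠ 0) (he : algebraMap F K e = x + x⁻¹) :
    x ^ q = x ∨ x ^ q = x⁻¹ := by
  refine eq_or_eq_inv_of_add_inv_eq hx (pow_ne_zero _ hx) ?_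
  rw [← inv_pow, ← pow_card_add, ← he, ← map_pow, FiniteField.pow_card]

theorem exists_algebraMap_eq_add_inv (hq : Odd q) {x : K} {w : ℕ}
    (hw : w = q / 2 ∨ w = q / 2 + 1) (hxw : x ^ (2 * w) = 1) :
    ∃ e : F, algebraMap F K e = x + x⁻¹ := by
  refine exists_algebraMap_eq_of_pow_card_eq_self ?_
  rw [pow_card_add, inv_pow]
  rcases pow_eq_self_or_eq_inv_of_pow_two_mul_eq_one hq hw hxw with h | h
  · rw [h]
  · rw [h, inv_inv, add_comm]

/-- For `s = ±1`, `2 + s (x + x⁻¹) = s (x + s) ^ 2 / x`, and Frobenius gives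
`(x + s) ^ (q - 1) = (x ^ q + s) / (x + s)`, which is `1` or `s / x` as `x ^ q = x` or `x⁻¹`. -/
theorem two_add_mul_add_inv_pow_half (hq : Odd q) {s x : K} {w : ℕ} (hs : s ^ 2 = 1)
    (hx : x ≠ 0) (hxs : x + s ≠ 0) (hw : w = q / 2 ∨ w = q / 2 + 1) (hxw : x ^ (2 * w) = 1) :
    (2 + s * (x + x⁻¹)) ^ (q / 2) = (s * x) ^ w := by
  have hq2 := Nat.two_mul_div_two_add_one_of_odd hq
  have hsq : s ^ q = s := by rw [← hq2, pow_succ, pow_mul, hs, one_pow, one_mul]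
  have hfrob : (x + s) ^ (2 * (q / 2)) * (x + s) = x ^ q + s := by
    rw [← pow_succ, hq2, pow_card_add, hsq]
  have hsplit : 2 + s * (x + x⁻¹) = s * ((x + s) ^ 2 * x⁻¹) := by
    linear_combination (-s * x - 2 * s ^ 2) * mul_inv_cancel₀ hx + (-2 - s * x⁻¹) * hs
  rw [hsplit, mul_pow, mul_pow, ← pow_mul, inv_pow]
  rcases hw with rfl | rfl
  · have hxq : x ^ q = x := by rw [← hq2, pow_succ, hxw, one_mul]
    have hA : (x + s) ^ (2 * (q / 2)) = 1 := mul_right_cancel₀ hxs (by rw [hfrob, hxq, one_mul])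
    rw [hA, one_mul, mul_pow, inv_eq_of_mul_eq_one_right (by rw [← pow_add, ← two_mul, hxw])]
  · have hxq : x ^ q = x⁻¹ :=
      eq_inv_of_mul_eq_one_left (by rw [← pow_succ, ← hxw]; congr 1; omega)
    have hA : (x + s) ^ (2 * (q / 2)) = s * x⁻¹ := mul_right_cancel₀ hxs (by
      rw [hfrob, hxq]
      linear_combination (-x⁻¹) * hs - s * inv_mul_cancel₀ hx)
    have hxw' : (x ^ (q / 2 + 1))⁻¹ = x ^ (q / 2 + 1) :=
      inv_eq_of_mul_eq_one_right (by rw [← pow_add, ← two_mul, hxw])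
    rw [hA, mul_pow, ← hxw', pow_succ s, pow_succ x, mul_inv]
    ring

theorem ringChar_ne_two_of_odd_card (hq : Odd q) : ringChar F ≠ 2 := fun h => by
  have := FiniteField.even_card_iff_char_two.1 h
  rw [Nat.odd_iff] at hq
  omega

theorem algebraMap_two_add_two_sub_pow_half (hq : Odd q) {e : F} {x : K}
    (he : algebraMap F K e = x + x⁻¹) (hx : x ≠ 0) (hx1 : x ≠ 1) (hxm1 : x ≠ -1) {w : ℕ}
    (hw : w = q / 2 ∨ w = q / 2 + 1) (hxw : x ^ (2 * w) = 1) :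
    algebraMap F K ((2 + e) ^ (q / 2)) = x ^ w ∧
      algebraMap F K ((2 - e) ^ (q / 2)) = (-x) ^ w := by
  have hplus := two_add_mul_add_inv_pow_half hq (one_pow 2) hx
    (fun h => hxm1 (eq_neg_of_add_eq_zero_left h)) hw hxw
  have hminus := two_add_mul_add_inv_pow_half hq (s := -1) (by norm_num) hx
    (by rwa [← sub_eq_add_neg, sub_ne_zero]) hw hxw
  rw [map_pow, map_add, map_ofNat, he, map_pow, map_sub, map_ofNat, he]
  exact ⟨by simpa using hplus, by simpa [sub_eq_add_neg] using hminus⟩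

theorem exists_add_inv_eq_algebraMap [IsAlgClosed K] (hq : Odd q) {e : F} (he2 : e ≠ 2)
    (hem2 : e ≠ -2) :
    ∃ x : K, ∃ w : ℕ, algebraMap F K e = x + x⁻¹ ∧ x ≠ 0 ∧ x ≠ 1 ∧ x ≠ -1 ∧
      (w = q / 2 ∨ w = q / 2 + 1) ∧ x ^ (2 * w) = 1 := by
  have hq2 := Nat.two_mul_div_two_add_one_of_odd hq
  obtain ⟨x, hx, hxe⟩ := exists_add_inv_eq (algebraMap F K e)
  have hx1 : x ≠ 1 := by
    rintro rfl
    exact he2 ((algebraMap F K).injective (by rw [← hxe, map_ofNat]; norm_num))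
  have hxm1 : x ≠ -1 := by
    rintro rfl
    exact hem2 ((algebraMap F K).injective (by rw [← hxe, map_neg, map_ofNat]; norm_num))
  rcases pow_card_eq_or_eq_inv hx hxe.symm with h | h
  · refine ⟨x, q / 2, hxe.symm, hx, hx1, hxm1, .inl rfl, mul_right_cancel₀ hx ?_⟩
    rw [← pow_succ, hq2, h, one_mul]
  · refine ⟨x, q / 2 + 1, hxe.symm, hx, hx1, hxm1, .inr rfl, ?_⟩
    rw [show 2 * (q / 2 + 1) = q + 1 by omega, pow_succ, h, inv_mul_cancel₀ hx]

theorem not_isSquare_iff_pow_half_eq_neg_one (hq : Odd q) {t : F} :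
    ¬IsSquare t ↔ t ^ (q / 2) = -1 := by
  have hF := ringChar_ne_two_of_odd_card hq
  rcases eq_or_ne t 0 with rfl | ht
  · simp [zero_pow (Nat.div_pos Fintype.one_lt_card two_pos).ne']
  rw [FiniteField.isSquare_iff hF ht]
  rcases FiniteField.pow_dichotomy hF ht with h | h <;>
    simp [h, Ring.neg_one_ne_one_of_char_ne_two hF, (Ring.neg_one_ne_one_of_char_ne_two hF).symm]

theorem isSquare_and_ne_zero_iff_pow_half_eq_one (hq : Odd q) {t : F} :
    IsSquare t ∧ t ≠ 0 ↔ t ^ (q / 2) = 1 := by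
  rcases eq_or_ne t 0 with rfl | ht
  · simp [zero_pow (Nat.div_pos Fintype.one_lt_card two_pos).ne']
  rw [FiniteField.isSquare_iff (ringChar_ne_two_of_odd_card hq) ht]
  simp [ht]

theorem neg_one_ne_one_of_odd_card (hq : Odd q) : (-1 : K) ≠ 1 := by
  rw [← map_one (algebraMap F K), ← map_neg, (algebraMap F K).injective.ne_iff]
  exact Ring.neg_one_ne_one_of_char_ne_two (ringChar_ne_two_of_odd_card hq)

theorem natCast_ne_zero_of_odd_card (hq : Odd q) {m : ℕ} (hm : m = q / 2 ∨ m = q / 2 + 1) :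
    (m : K) ≠ 0 := by
  have hq0 : (q : K) = 0 := by
    rw [← map_natCast (algebraMap F K), FiniteField.cast_card_eq_zero, map_zero]
  have hq2 := Nat.two_mul_div_two_add_one_of_odd hq
  intro hm0
  obtain h | h : 2 * m + 1 = q ∨ 2 * m = q + 1 := by omega
  all_goals
    have := congrArg (Nat.cast : ℕ → K) h
    push_cast at this
    simp [hm0, hq0] at this

theorem two_sub_pow_half_eq_neg_one_and_two_add_pow_half_iff [IsAlgClosed K] (hq : Odd q)
    {w : ℕ} (hw : w = q / 2 ∨ w = q / 2 + 1) (e : F) :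
    ((2 - e) ^ (q / 2) = -1 ∧ (2 + e) ^ (q / 2) = -(-1) ^ w) ↔
      ∃ x : K, x ≠ 1 ∧ (-x) ^ w = -1 ∧ algebraMap F K e = x + x⁻¹ := by
  have hK := neg_one_ne_one_of_odd_card (K := K) hq
  have hh : q / 2 ≠ 0 := (Nat.div_pos Fintype.one_lt_card two_pos).ne'
  constructor
  · rintro ⟨hminus, hplus⟩
    have he2 : e ≠ 2 := by rintro rfl; simp [zero_pow hh] at hminus
    have hem2 : e ≠ -2 := by rintro rfl; simp [zero_pow hh] at hplus
    obtain ⟨x, w', hxe, hx0, hx1, hxm1, hw', hxw'⟩ :=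
      exists_add_inv_eq_algebraMap (K := K) hq he2 hem2
    obtain ⟨hp, hm⟩ := algebraMap_two_add_two_sub_pow_half hq hxe hx0 hx1 hxm1 hw' hxw'
    rw [hplus, map_neg, map_pow, map_neg, map_one] at hp
    rw [hminus, map_neg, map_one] at hm
    have hww : Even (w + w') := by
      refine (neg_one_pow_eq_one_iff_even hK).1 ?_
      rw [pow_add]
      linear_combination (-(-1) ^ w') * hp + hm + neg_pow x w'
    obtain rfl : w' = w := by rw [Nat.even_iff] at hww; omega
    exact ⟨x, hx1, hm.symm, hxe⟩
  · rintro ⟨x, hx1, hxw, hxe⟩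
    have hw0 : w ≠ 0 := by omega
    have hx0 : x ≠ 0 := by rintro rfl; simp [zero_pow hw0] at hxw
    have hxm1 : x ≠ -1 := by rintro rfl; rw [neg_neg, one_pow] at hxw; exact hK hxw.symm
    have hxw2 : x ^ (2 * w) = 1 := by rw [← (even_two_mul w).neg_pow, pow_mul', hxw]; norm_num
    have hsign : ((-1 : K) ^ w) ^ 2 = 1 := by rw [← pow_mul, pow_mul', neg_one_sq, one_pow]
    obtain ⟨hp, hm⟩ := algebraMap_two_add_two_sub_pow_half hq hxe hx0 hx1 hxm1 hw hxw2
    refine ⟨(algebraMap F K).injective ?_, (algebraMap F K).injective ?_⟩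
    · rw [hm, hxw, map_neg, map_one]
    · rw [hp, map_neg, map_pow, map_neg, map_one]
      linear_combination (-1) ^ w * hxw - (-1) ^ w * neg_pow x w - x ^ w * hsign

theorem not_isSquare_two_sub_and_isSquare_two_add_iff [IsAlgClosed K] (hq : Odd q) {n : ℕ}
    (hn : n = q / 2 ∨ n = q / 2 + 1) (hno : Odd n) (e : F) :
    (¬IsSquare (2 - e) ∧ IsSquare (2 + e) ∧ 2 + e ≠ 0) ↔
      ∃ x : K, x ≠ 1 ∧ x ^ n = 1 ∧ algebraMap F K e = x + x⁻¹ := by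
  have h := two_sub_pow_half_eq_neg_one_and_two_add_pow_half_iff (K := K) hq hn e
  rw [hno.neg_one_pow, neg_neg] at h
  rw [not_isSquare_iff_pow_half_eq_neg_one hq, isSquare_and_ne_zero_iff_pow_half_eq_one hq, h]
  simp only [hno.neg_pow, neg_inj]

theorem not_isSquare_two_sub_and_not_isSquare_two_add_iff [IsAlgClosed K] (hq : Odd q) {m : ℕ}
    (hm : m = q / 2 ∨ m = q / 2 + 1) (hme : Even m) (e : F) :
    (¬IsSquare (2 - e) ∧ ¬IsSquare (2 + e)) ↔
      ∃ y : K, y ^ m = -1 ∧ algebraMap F K e = y + y⁻¹ := by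
  have h := two_sub_pow_half_eq_neg_one_and_two_add_pow_half_iff (K := K) hq hm e
  rw [hme.neg_one_pow] at h
  rw [not_isSquare_iff_pow_half_eq_neg_one hq, not_isSquare_iff_pow_half_eq_neg_one hq, h]
  simp only [hme.neg_pow]
  refine ⟨fun ⟨y, _, hy, he⟩ => ⟨y, hy, he⟩, fun ⟨y, hy, he⟩ => ⟨y, ?_, hy, he⟩⟩
  rintro rfl
  exact neg_one_ne_one_of_odd_card hq (by rw [← hy, one_pow])

theorem image_filter_not_isSquare_eq [IsAlgClosed K] (hq : Odd q) {m : ℕ}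
    (hm : m = q / 2 ∨ m = q / 2 + 1) (hme : Even m) :
    (univ.filter fun a : F => ¬IsSquare (2 - a) ∧ ¬IsSquare (2 + a)).image (algebraMap F K) =
      (nthRootsFinset m (-1 : K)).image fun y => y + y⁻¹ := by
  have hm0 : 0 < m := by have : 1 < q := Fintype.one_lt_card; omega
  ext t
  simp only [mem_image, mem_filter, mem_univ, true_and, mem_nthRootsFinset hm0,
    not_isSquare_two_sub_and_not_isSquare_two_add_iff (K := K) hq hm hme]
  constructor
  · rintro ⟨a, ⟨y, hy, hya⟩, rfl⟩
    exact ⟨y, hy, hya.symm⟩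
  · rintro ⟨y, hy, rfl⟩
    obtain ⟨a, ha⟩ :=
      exists_algebraMap_eq_add_inv hq hm (x := y) (by rw [pow_mul', hy]; norm_num)
    exact ⟨a, ⟨y, hy, ha⟩, ha⟩

theorem algebraMap_prod_sub_eq [IsAlgClosed K] (hq : Odd q) {m : ℕ}
    (hm : m = q / 2 ∨ m = q / 2 + 1) (hme : Even m) {b : F} {x : K} (hx : x ≠ 0)
    (hxb : algebraMap F K b = x + x⁻¹) :
    algebraMap F K (∏ a ∈ univ.filter
        (fun a : F => ¬IsSquare (2 - a) ∧ ¬IsSquare (2 + a)), (b - a)) =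
      x ^ (m / 2) + (x ^ (m / 2))⁻¹ := by
  have hm0 := natCast_ne_zero_of_odd_card (K := K) hq hm
  set A := (nthRootsFinset m (-1 : K)).image fun y => y + y⁻¹
  have hcard : 2 * #A = m := two_mul_card_image_nthRootsFinset_neg_one hm0 hme
  have hprod (z : K) : ∏ t ∈ A, (z ^ 2 - t * z + 1) = z ^ (2 * #A) + 1 := by
    rw [hcard]
    exact prod_image_nthRootsFinset_neg_one hm0 hme z
  rw [← hcard, Nat.mul_div_cancel_left _ two_pos, ← prod_add_inv_sub_eq_pow_add_inv hprod hx,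
    show A = _ from (image_filter_not_isSquare_eq hq hm hme).symm,
    prod_image (algebraMap F K).injective.injOn, map_prod]
  simp only [map_sub, hxb]

end FiniteField

/-- Let `S = {b ∈ F_q : 2 - b is a nonsquare and 2 + b is a nonzero
square}`. For `b ∈ S`, let `c = ∏ (b - a)`, the product over all `a ∈ F_q` with `2 - a`
and `2 + a` both nonsquares. Then `c ∈ S` and `c² - 2 = b`; i.e. this is the inverse of
the permutation `b ↦ b² - 2` of `S`. -/
theorem prod_inverse_of_sq_sub_two {F : Type*} [Field F] [Fintype F]
    (hq : Odd (Fintype.card F)) (b : F)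
    (hb : ¬ IsSquare (2 - b) ∧ (IsSquare (2 + b) ∧ 2 + b ≠ 0)) :
    let c := ∏ a ∈ Finset.univ.filter
        (fun a : F => ¬ IsSquare (2 - a) ∧ ¬ IsSquare (2 + a)), (b - a)
    (¬ IsSquare (2 - c) ∧ (IsSquare (2 + c) ∧ 2 + c ≠ 0)) ∧ c ^ 2 - 2 = b := by
  intro c
  obtain ⟨n, m, hn, hm, hno, hme⟩ :=
    exists_odd_and_even_among_self_and_succ (Fintype.card F / 2)
  have hS := not_isSquare_two_sub_and_isSquare_two_add_iff (K := AlgebraicClosure F) hq hn hno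
  obtain ⟨x, hx1, hxn, hxb⟩ := (hS b).1 hb
  have hx0 : x ≠ 0 := by rintro rfl; simp [zero_pow hno.pos.ne'] at hxn
  have hc := algebraMap_prod_sub_eq hq hm hme hx0 hxb
  have hu : (x ^ (m / 2)) ^ 2 = x ^ m := by rw [← pow_mul, Nat.div_mul_cancel hme.two_dvd]
  have hxm : x ^ m = x ∨ x ^ m = x⁻¹ := pow_eq_self_or_eq_inv_of_pow_eq_one hxn (by
    rw [Nat.odd_iff] at hno; rw [Nat.even_iff] at hme; omega)
  refine ⟨(hS c).2 ⟨x ^ (m / 2), fun hu1 => hx1 ?_, ?_, hc⟩,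
    (algebraMap F (AlgebraicClosure F)).injective ?_⟩
  · rw [hu1, one_pow] at hu
    rcases hxm with h | h
    exacts [h ▸ hu.symm, inv_eq_one.1 (h ▸ hu.symm)]
  · rw [← pow_mul, mul_comm, pow_mul, hxn, one_pow]
  · rw [map_sub, map_pow, hc, map_ofNat, hxb, add_inv_sq_sub_two (pow_ne_zero _ hx0), hu]
    rcases hxm with h | h
    · rw [h]
    · rw [h, inv_inv, add_comm]
end
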